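/- Let Z > 1 be a real number and consider the financial network with three banks v1, v2, v3, external assets e = (1, 0, 0), liabilities l_{v1,v2} = l_{v1,v3} = Z and l_{v2,v1} = Z (all others 0), no default costs (α = β = 1), and no cash injections. Then: (i) the maximal clearing payments of the full network are p_{v1,v2} = p_{v1,v3} = p_{v2,v1} = 1, so its systemic liquidity is 3; (ii) the profile in which no bank removes any incoming edge is the unique pure Nash equilibrium of the edge-removal game; (iii) the profile in which v3 removes its incoming edge (i.e., l_{v1,v3} is set to 0) has maximal clearing payments p_{v1,v2} = p_{v2,v1} = Z and systemic liquidity 2Z. Consequently, the Price of Stability of edge-removal games is at least 2Z/3, and hence unbounded. -/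
import Mathlib


open Finset

/-- `p` is a proportional clearing payment matrix for the network with external assets `e`,
liabilities `l` and default costs `α, β`. -/
def IsClearing {ι : Type*} [Fintype ι] (α β : ℝ) (e : ι → ℝ) (l : ι → ι → ℝ)
    (p : ι → ι → ℝ) : Prop :=
  (∀ i j, 0 ≤ p i j) ∧ (∀ i j, p i j ≤ l i j) ∧
  (∀ i, (∑ j, l i j) ≤ e i + (∑ j, p j i) → ∀ j, p i j = l i j) ∧
  (∀ i, e i + (∑ j, p j i) < (∑ j, l i j) →
    ∀ j, p i j = (α * e i + β * (∑ k, p k i)) * l i j / (∑ k, l i k))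

/-- `p` is the maximal clearing payment matrix. -/
def IsMaxClearing {ι : Type*} [Fintype ι] (α β : ℝ) (e : ι → ℝ) (l p : ι → ι → ℝ) : Prop :=
  IsClearing α β e l p ∧ ∀ q, IsClearing α β e l q → ∀ i j, q i j ≤ p i j

/-- Systemic liquidity: the sum of all payments. -/
def liquidity {ι : Type*} [Fintype ι] (p : ι → ι → ℝ) : ℝ := ∑ i, ∑ j, p i j

/-- Total assets of bank `i` under payments `p`. -/
def assets {ι : Type*} [Fintype ι] (e : ι → ℝ) (p : ι → ι → ℝ) (i : ι) : ℝ :=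
  e i + ∑ j, p j i

/-- The liabilities obtained from `l` when each bank `j` removes the incoming edges from
the banks in `s j`. -/
def removeEdges {ι : Type*} [DecidableEq ι] (l : ι → ι → ℝ) (s : ι → Finset ι) :
    ι → ι → ℝ :=
  fun i j => if i ∈ s j then 0 else l i j

/-- `s` is a pure Nash equilibrium of the edge-removal game with payment rule `Pay`. -/
def NashEq {ι : Type*} [Fintype ι] [DecidableEq ι] (e : ι → ℝ)
    (Pay : (ι → Finset ι) → ι → ι → ℝ) (s : ι → Finset ι) : Prop :=
  ∀ (j : ι) (R : Finset ι),
    assets e (Pay (Function.update s j R)) j ≤ assets e (Pay s) j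

noncomputable def eW : Fin 3 → ℝ := fun i => if i = 0 then 1 else 0
noncomputable def lW (Z : ℝ) : Fin 3 → Fin 3 → ℝ :=
  fun i j => if (i = 0 ∧ (j = 1 ∨ j = 2)) ∨ (i = 1 ∧ j = 0) then Z else 0
noncomputable def pW : Fin 3 → Fin 3 → ℝ :=
  fun i j => if (i = 0 ∧ (j = 1 ∨ j = 2)) ∨ (i = 1 ∧ j = 0) then (1:ℝ) else 0
noncomputable def l2W (Z : ℝ) : Fin 3 → Fin 3 → ℝ :=
  fun i j => if i = 0 ∧ (j = 1 ∨ j = 2) then Z else 0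
noncomputable def p2W : Fin 3 → Fin 3 → ℝ :=
  fun i j => if i = 0 ∧ (j = 1 ∨ j = 2) then (1/2:ℝ) else 0
noncomputable def l3W (Z : ℝ) : Fin 3 → Fin 3 → ℝ :=
  fun i j => if (i = 0 ∧ j = 1) ∨ (i = 1 ∧ j = 0) then Z else 0
noncomputable def l4W (Z : ℝ) : Fin 3 → Fin 3 → ℝ :=
  fun i j => if i = 0 ∧ j = 1 then Z else 0
noncomputable def p4W : Fin 3 → Fin 3 → ℝ :=
  fun i j => if i = 0 ∧ j = 1 then (1:ℝ) else 0

lemma cert1 (Z : ℝ) (hZ : 1 < Z) : IsClearing 1 1 eW (lW Z) pW := by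
  have hZ0 : Z ≠ 0 := by linarith
  refine ⟨?_, ?_, ?_, ?_⟩
  · intro i j; fin_cases i <;> fin_cases j <;> simp [pW]
  · intro i j; fin_cases i <;> fin_cases j <;> simp [pW, lW] <;> linarith
  · intro i hi j
    fin_cases i <;>
      simp [pW, lW, eW, Fin.sum_univ_three] at hi ⊢ <;> linarith
  · intro i hi j
    fin_cases i <;>
      simp [pW, lW, eW, Fin.sum_univ_three] at hi ⊢ <;> fin_cases j <;>
      simp [pW, lW] <;> field_simp <;> ring

lemma cert1max (Z : ℝ) (hZ : 1 < Z) :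
    ∀ q, IsClearing 1 1 eW (lW Z) q → ∀ i j, q i j ≤ pW i j := by
  have hZ0 : Z ≠ 0 := by linarith
  intro q ⟨h0, hle, hfull, hdef⟩
  have hz : ∀ i j, lW Z i j = 0 → q i j = 0 := fun i j h =>
    le_antisymm (h ▸ hle i j) (h0 i j)
  have q00 : q 0 0 = 0 := hz 0 0 (by simp [lW])
  have q20 : q 2 0 = 0 := hz 2 0 (by simp [lW])
  have q11 : q 1 1 = 0 := hz 1 1 (by simp [lW])
  have q21 : q 2 1 = 0 := hz 2 1 (by simp [lW])
  have hq10 : q 1 0 ≤ Z := by have := hle 1 0; simpa [lW] using this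
  have hb0 : eW 0 + (∑ j, q j 0) < (∑ j, lW Z 0 j) := by
    simp [eW, lW, Fin.sum_univ_three, q00, q20]; linarith
  have h01 := hdef 0 hb0 1
  have h02 := hdef 0 hb0 2
  simp [eW, lW, Fin.sum_univ_three, q00, q20] at h01 h02
  have hq01 : q 0 1 < Z := by
    rw [h01]; rw [div_lt_iff₀ (by linarith)]; nlinarith
  have hb1 : eW 1 + (∑ j, q j 1) < (∑ j, lW Z 1 j) := by
    simp [eW, lW, Fin.sum_univ_three, q11, q21]; linarith
  have h10 := hdef 1 hb1 0
  simp [eW, lW, Fin.sum_univ_three, q11, q21] at h10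
  rw [mul_div_assoc, div_self hZ0, mul_one] at h10
  have e01 : q 0 1 = 1 := by
    field_simp at h01
    nlinarith [h01]
  have e10 : q 1 0 = 1 := by rw [h10, e01]
  have e02 : q 0 2 = 1 := by rw [h02, ← h01, e01]
  have q12 : q 1 2 = 0 := hz 1 2 (by simp [lW])
  have q22 : q 2 2 = 0 := hz 2 2 (by simp [lW])
  intro i j
  fin_cases i <;> fin_cases j <;>
    simp [pW, e01, e02, e10, q00, q20, q11, q21, q12, q22]

lemma cert2 (Z : ℝ) (hZ : 1 < Z) : IsClearing 1 1 eW (l2W Z) p2W := by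
  have hZ0 : Z ≠ 0 := by linarith
  refine ⟨?_, ?_, ?_, ?_⟩
  · intro i j; fin_cases i <;> fin_cases j <;> simp [p2W] <;> norm_num
  · intro i j; fin_cases i <;> fin_cases j <;> simp [p2W, l2W] <;> linarith
  · intro i hi j
    fin_cases i <;>
      simp [p2W, l2W, eW, Fin.sum_univ_three] at hi ⊢ <;> first | rfl | linarith
  · intro i hi j
    fin_cases i <;>
      simp [p2W, l2W, eW, Fin.sum_univ_three] at hi ⊢ <;> fin_cases j <;>
      simp [p2W, l2W] <;> field_simp <;> ring

lemma cert3 (Z : ℝ) (hZ : 1 < Z) : IsClearing 1 1 eW (l3W Z) (l3W Z) := by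
  have hZ0 : Z ≠ 0 := by linarith
  refine ⟨?_, ?_, ?_, ?_⟩
  · intro i j; fin_cases i <;> fin_cases j <;> simp [l3W] <;> linarith
  · intro i j; exact le_refl _
  · intro i _ j; rfl
  · intro i hi j
    exfalso
    fin_cases i <;> simp [l3W, eW, Fin.sum_univ_three] at hi <;> linarith

lemma cert4 (Z : ℝ) (hZ : 1 < Z) : IsClearing 1 1 eW (l4W Z) p4W := by
  have hZ0 : Z ≠ 0 := by linarith
  refine ⟨?_, ?_, ?_, ?_⟩
  · intro i j; fin_cases i <;> fin_cases j <;> simp [p4W] <;> norm_num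
  · intro i j; fin_cases i <;> fin_cases j <;> simp [p4W, l4W] <;> linarith
  · intro i hi j
    fin_cases i <;>
      simp [p4W, l4W, eW, Fin.sum_univ_three] at hi ⊢ <;> first | rfl | linarith
  · intro i hi j
    fin_cases i <;>
      simp [p4W, l4W, eW, Fin.sum_univ_three] at hi ⊢ <;> fin_cases j <;>
      simp [p4W, l4W] <;> field_simp <;> ring

-- removeEdges computations
lemma remFull (Z : ℝ) (s : Fin 3 → Finset (Fin 3)) (h1 : (0:Fin 3) ∉ s 1)
    (h2 : (0:Fin 3) ∉ s 2) (h0 : (1:Fin 3) ∉ s 0) :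
    removeEdges (lW Z) s = lW Z := by
  funext i j
  fin_cases i <;> fin_cases j <;> simp [removeEdges, lW, h0, h1, h2, ite_self]

lemma remFFT (Z : ℝ) (s : Fin 3 → Finset (Fin 3)) (h1 : (0:Fin 3) ∉ s 1)
    (h2 : (0:Fin 3) ∉ s 2) (h0 : (1:Fin 3) ∈ s 0) :
    removeEdges (lW Z) s = l2W Z := by
  funext i j
  fin_cases i <;> fin_cases j <;> simp [removeEdges, lW, l2W, h0, h1, h2, ite_self]

lemma remFTF (Z : ℝ) (s : Fin 3 → Finset (Fin 3)) (h1 : (0:Fin 3) ∉ s 1)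
    (h2 : (0:Fin 3) ∈ s 2) (h0 : (1:Fin 3) ∉ s 0) :
    removeEdges (lW Z) s = l3W Z := by
  funext i j
  fin_cases i <;> fin_cases j <;> simp [removeEdges, lW, l3W, h0, h1, h2, ite_self]

lemma remFTT (Z : ℝ) (s : Fin 3 → Finset (Fin 3)) (h1 : (0:Fin 3) ∉ s 1)
    (h2 : (0:Fin 3) ∈ s 2) (h0 : (1:Fin 3) ∈ s 0) :
    removeEdges (lW Z) s = l4W Z := by
  funext i j
  fin_cases i <;> fin_cases j <;> simp [removeEdges, lW, l4W, h0, h1, h2, ite_self]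

lemma liq3 (f : Fin 3 → Fin 3 → ℝ) :
    liquidity f = f 0 0 + f 0 1 + f 0 2 + (f 1 0 + f 1 1 + f 1 2) + (f 2 0 + f 2 1 + f 2 2) := by
  simp only [liquidity, Fin.sum_univ_three]

lemma assets3 (e : Fin 3 → ℝ) (f : Fin 3 → Fin 3 → ℝ) (j : Fin 3) :
    assets e f j = e j + (f 0 j + f 1 j + f 2 j) := by
  simp only [assets, Fin.sum_univ_three]

/-- The three-bank network with `e = (1,0,0)` and liabilities `l₁₂ = l₁₃ = l₂₁ = Z`
(`Z > 1`), no default costs, no cash injections: (i) the full network has maximal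
clearing payments `p₁₂ = p₁₃ = p₂₁ = 1` and liquidity 3; (ii) the no-removal profile is
the unique pure Nash equilibrium (among profiles removing only existing edges);
(iii) when v3 removes its incoming edge the maximal clearing payments are
`p₁₂ = p₂₁ = Z` with liquidity `2Z`.  Hence the Price of Stability is at least `2Z/3`
and thus unbounded. -/
theorem pos_unbounded_three_banks
    (Z : ℝ) (hZ : 1 < Z)
    (e : Fin 3 → ℝ) (he : e = fun i => if i = 0 then 1 else 0)
    (l : Fin 3 → Fin 3 → ℝ)
    (hl : l = fun i j =>
      if (i = 0 ∧ (j = 1 ∨ j = 2)) ∨ (i = 1 ∧ j = 0) then Z else 0)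
    (Pay : (Fin 3 → Finset (Fin 3)) → Fin 3 → Fin 3 → ℝ)
    (hPay : ∀ s, IsMaxClearing 1 1 e (removeEdges l s) (Pay s)) :
    -- (i) maximal clearing payments and liquidity of the full network
    (IsMaxClearing 1 1 e l
        (fun i j => if (i = 0 ∧ (j = 1 ∨ j = 2)) ∨ (i = 1 ∧ j = 0) then (1:ℝ) else 0) ∧
      liquidity (fun i j : Fin 3 =>
        if (i = 0 ∧ (j = 1 ∨ j = 2)) ∨ (i = 1 ∧ j = 0) then (1:ℝ) else 0) = 3)
    -- (ii) the no-removal profile is the unique pure Nash equilibrium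
    ∧ NashEq e Pay (fun _ => (∅ : Finset (Fin 3)))
    ∧ (∀ s : Fin 3 → Finset (Fin 3), (∀ j, ∀ i ∈ s j, 0 < l i j) →
        NashEq e Pay s → s = fun _ => (∅ : Finset (Fin 3)))
    -- (iii) v3 removing its incoming edge yields liquidity 2Z
    ∧ (IsMaxClearing 1 1 e
        (removeEdges l (Function.update (fun _ => (∅ : Finset (Fin 3))) 2 {0}))
        (fun i j => if (i = 0 ∧ j = 1) ∨ (i = 1 ∧ j = 0) then Z else 0) ∧
      liquidity (fun i j : Fin 3 =>
        if (i = 0 ∧ j = 1) ∨ (i = 1 ∧ j = 0) then Z else 0) = 2 * Z) := by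
  have heW : e = eW := he
  have hlW : l = lW Z := hl
  subst heW hlW
  have hPayW : ∀ s, IsMaxClearing 1 1 eW (removeEdges (lW Z) s) (Pay s) := hPay
  -- uniqueness of Pay against an explicit max clearing
  have payEq : ∀ (s : Fin 3 → Finset (Fin 3)) (m : Fin 3 → Fin 3 → ℝ),
      IsMaxClearing 1 1 eW (removeEdges (lW Z) s) m → ∀ i j, Pay s i j = m i j := by
    intro s m ⟨hc, hmax⟩ i j
    obtain ⟨hc', hmax'⟩ := hPayW s
    exact le_antisymm (hmax _ hc' i j) (hmax' _ hc i j)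
  have maxFull : IsMaxClearing 1 1 eW (lW Z) pW := ⟨cert1 Z hZ, cert1max Z hZ⟩
  -- Pay of the empty profile
  have hrem0 : removeEdges (lW Z) (fun _ => (∅ : Finset (Fin 3))) = lW Z :=
    remFull Z _ (by simp) (by simp) (by simp)
  have hP0 : ∀ i j, Pay (fun _ => (∅ : Finset (Fin 3))) i j = pW i j :=
    payEq _ pW (by rw [hrem0]; exact maxFull)
  have hA0 : ∀ j, assets eW (Pay (fun _ => (∅ : Finset (Fin 3)))) j = assets eW pW j := by
    intro j; simp [assets, hP0]
  refine ⟨⟨?_, ?_⟩, ?_, ?_, ⟨?_, ?_⟩⟩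
  · exact maxFull
  · show liquidity pW = 3
    rw [liq3]
    simp [pW]
    norm_num
  · -- Nash equilibrium of the empty profile
    intro j R
    set s0 : Fin 3 → Finset (Fin 3) := fun _ => (∅ : Finset (Fin 3)) with hs0
    set s' := Function.update s0 j R with hs'
    fin_cases j
    · by_cases hR : (1 : Fin 3) ∈ R
      · have hub : ∀ i, Pay s' i 0 ≤ 0 := by
          intro i
          have h := (hPayW s').1.2.1 i 0
          have hz : removeEdges (lW Z) s' i 0 = 0 := by
            fin_cases i <;> simp [removeEdges, lW, hs', Function.update, hR, s0]
          linarith [h, hz ▸ h]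
        have := hub 0; have := hub 1; have := hub 2
        show assets eW (Pay s') 0 ≤ assets eW (Pay s0) 0
        rw [hA0 0, assets3, assets3]
        simp [pW, eW]
        linarith [hub 0, hub 1, hub 2]
      · have : removeEdges (lW Z) s' = lW Z := by
          apply remFull <;> simp [hs', Function.update, s0, hR]
        have hP' : ∀ i j, Pay s' i j = pW i j := payEq _ pW (by rw [this]; exact maxFull)
        show assets eW (Pay s') 0 ≤ assets eW (Pay s0) 0
        rw [hA0 0, assets3, assets3]; simp [hP']
    · by_cases hR : (0 : Fin 3) ∈ R
      · have hub : ∀ i, Pay s' i 1 ≤ 0 := by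
          intro i
          have h := (hPayW s').1.2.1 i 1
          have hz : removeEdges (lW Z) s' i 1 = 0 := by
            fin_cases i <;> simp [removeEdges, lW, hs', Function.update, hR, s0]
          linarith [h, hz ▸ h]
        have := hub 0; have := hub 1; have := hub 2
        show assets eW (Pay s') 1 ≤ assets eW (Pay s0) 1
        rw [hA0 1, assets3, assets3]
        simp [pW, eW]
        linarith [hub 0, hub 1, hub 2]
      · have : removeEdges (lW Z) s' = lW Z := by
          apply remFull <;> simp [hs', Function.update, s0, hR]
        have hP' : ∀ i j, Pay s' i j = pW i j := payEq _ pW (by rw [this]; exact maxFull)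
        show assets eW (Pay s') 1 ≤ assets eW (Pay s0) 1
        rw [hA0 1, assets3, assets3]; simp [hP']
    · by_cases hR : (0 : Fin 3) ∈ R
      · have hub : ∀ i, Pay s' i 2 ≤ 0 := by
          intro i
          have h := (hPayW s').1.2.1 i 2
          have hz : removeEdges (lW Z) s' i 2 = 0 := by
            fin_cases i <;> simp [removeEdges, lW, hs', Function.update, hR, s0]
          linarith [h, hz ▸ h]
        have := hub 0; have := hub 1; have := hub 2
        show assets eW (Pay s') 2 ≤ assets eW (Pay s0) 2
        rw [hA0 2, assets3, assets3]
        simp [pW, eW]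
        linarith [hub 0, hub 1, hub 2]
      · have : removeEdges (lW Z) s' = lW Z := by
          apply remFull <;> simp [hs', Function.update, s0, hR]
        have hP' : ∀ i j, Pay s' i j = pW i j := payEq _ pW (by rw [this]; exact maxFull)
        show assets eW (Pay s') 2 ≤ assets eW (Pay s0) 2
        rw [hA0 2, assets3, assets3]; simp [hP']
  · -- uniqueness of the Nash equilibrium
    intro s hpos hnash
    have hs0 : ∀ i ∈ s 0, i = (1 : Fin 3) := by
      intro i hi
      have := hpos 0 i hi
      fin_cases i <;> simp [lW] at this ⊢
    have hs1 : ∀ i ∈ s 1, i = (0 : Fin 3) := by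
      intro i hi
      have := hpos 1 i hi
      fin_cases i <;> simp [lW] at this ⊢
    have hs2 : ∀ i ∈ s 2, i = (0 : Fin 3) := by
      intro i hi
      have := hpos 2 i hi
      fin_cases i <;> simp [lW] at this ⊢
    -- assets of a bank whose incoming edge is removed are ≤ e
    have hcut : ∀ (t : Fin 3 → Finset (Fin 3)) (j : Fin 3),
        (∀ i, removeEdges (lW Z) t i j = 0) → assets eW (Pay t) j ≤ eW j := by
      intro t j hzz
      have hub : ∀ i, Pay t i j ≤ 0 := fun i => (hzz i) ▸ (hPayW t).1.2.1 i j
      have := hub 0; have := hub 1; have := hub 2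
      rw [assets3]
      linarith
    -- lower bound on assets from a clearing certificate
    have hlb : ∀ (t : Fin 3 → Finset (Fin 3)) (m : Fin 3 → Fin 3 → ℝ) (j : Fin 3),
        IsClearing 1 1 eW (removeEdges (lW Z) t) m →
        eW j + (m 0 j + m 1 j + m 2 j) ≤ assets eW (Pay t) j := by
      intro t m j hm
      have h0 := (hPayW t).2 m hm 0 j
      have h1 := (hPayW t).2 m hm 1 j
      have h2 := (hPayW t).2 m hm 2 j
      rw [assets3]
      linarith
    have ha : (0 : Fin 3) ∉ s 1 := by
      intro ha
      have key := hnash 1 ∅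
      have hr : assets eW (Pay s) 1 ≤ 0 := by
        have := hcut s 1 ?_
        · simpa [eW] using this
        · intro i; fin_cases i <;> simp [removeEdges, lW, ha, ite_self]
      set s' := Function.update s 1 ∅ with hs'
      have h1' : (0 : Fin 3) ∉ s' 1 := by simp [hs', Function.update]
      have h0eq : s' 0 = s 0 := by simp [hs', Function.update]
      have h2eq : s' 2 = s 2 := by simp [hs', Function.update]
      have hpos' : 0 < assets eW (Pay s') 1 := by
        by_cases hb : (0 : Fin 3) ∈ s' 2 <;> by_cases hc : (1 : Fin 3) ∈ s' 0
        · have hre := remFTT Z s' h1' hb hc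
          have := hlb s' p4W 1 (by rw [hre]; exact cert4 Z hZ)
          simp [eW, p4W] at this; linarith
        · have hre := remFTF Z s' h1' hb hc
          have := hlb s' (l3W Z) 1 (by rw [hre]; exact cert3 Z hZ)
          simp [eW, l3W] at this; linarith
        · have hre := remFFT Z s' h1' hb hc
          have := hlb s' p2W 1 (by rw [hre]; exact cert2 Z hZ)
          simp [eW, p2W] at this; linarith
        · have hre := remFull Z s' h1' hb hc
          have := hlb s' pW 1 (by rw [hre]; exact cert1 Z hZ)
          simp [eW, pW] at this; linarith
      linarith
    have hb : (0 : Fin 3) ∉ s 2 := by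
      intro hbm
      have key := hnash 2 ∅
      have hr : assets eW (Pay s) 2 ≤ 0 := by
        have := hcut s 2 ?_
        · simpa [eW] using this
        · intro i; fin_cases i <;> simp [removeEdges, lW, hbm, ite_self]
      set s' := Function.update s 2 ∅ with hs'
      have h2' : (0 : Fin 3) ∉ s' 2 := by simp [hs', Function.update]
      have h1' : (0 : Fin 3) ∉ s' 1 := by simpa [hs', Function.update] using ha
      have hpos' : 0 < assets eW (Pay s') 2 := by
        by_cases hc : (1 : Fin 3) ∈ s' 0
        · have hre := remFFT Z s' h1' h2' hc
          have := hlb s' p2W 2 (by rw [hre]; exact cert2 Z hZ)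
          simp [eW, p2W] at this; linarith
        · have hre := remFull Z s' h1' h2' hc
          have := hlb s' pW 2 (by rw [hre]; exact cert1 Z hZ)
          simp [eW, pW] at this; linarith
      linarith
    have hc : (1 : Fin 3) ∉ s 0 := by
      intro hcm
      have key := hnash 0 ∅
      have hr : assets eW (Pay s) 0 ≤ 1 := by
        have := hcut s 0 ?_
        · simpa [eW] using this
        · intro i; fin_cases i <;> simp [removeEdges, lW, hcm, ite_self]
      set s' := Function.update s 0 ∅ with hs'
      have h0' : (1 : Fin 3) ∉ s' 0 := by simp [hs', Function.update]
      have h1' : (0 : Fin 3) ∉ s' 1 := by simpa [hs', Function.update] using ha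
      have h2' : (0 : Fin 3) ∉ s' 2 := by simpa [hs', Function.update] using hb
      have hpos' : (2:ℝ) ≤ assets eW (Pay s') 0 := by
        have hre := remFull Z s' h1' h2' h0'
        have := hlb s' pW 0 (by rw [hre]; exact cert1 Z hZ)
        simp [eW, pW] at this; linarith
      linarith
    funext j
    fin_cases j
    · exact Finset.eq_empty_iff_forall_notMem.2 fun i hi => by
        have := hs0 i hi; subst this; exact hc hi
    · exact Finset.eq_empty_iff_forall_notMem.2 fun i hi => by
        have := hs1 i hi; subst this; exact ha hi
    · exact Finset.eq_empty_iff_forall_notMem.2 fun i hi => by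
        have := hs2 i hi; subst this; exact hb hi
  · -- part (iii): max clearing after v3 removes its edge
    have hre : removeEdges (lW Z) (Function.update (fun _ => (∅ : Finset (Fin 3))) 2 {0})
        = l3W Z := by
      apply remFTF <;> simp [Function.update]
    show IsMaxClearing 1 1 eW _ (l3W Z)
    rw [hre]
    exact ⟨cert3 Z hZ, fun q hq i j => hq.2.1 i j⟩
  · show liquidity (l3W Z) = 2 * Z
    simp [liquidity, l3W, Fin.sum_univ_three]
    ring
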